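/- Let M > 0 and assume the fully-discrete scheme admits solutions θ^N_n ∈ S_N, n = 0, …, N_T, whose values lie in [-M, M]. Then there exists a constant C_0 > 0, depending only on θ^0, S, T, M, k, h and δ (in particular independent of N and Δt), such that for every 1 ≤ m ≤ N_T: Σ_{n=1}^{m} ‖θ^N_n − θ^N_{n-1}‖_{L^2_w}^2 + ‖θ^N_m‖_{L^2_w}^2 + Δt Σ_{n=1}^{m} ‖L(θ^N_n)‖_{L^2_w}^2 ≤ C_0 (stability estimate for the fully-discrete scheme). -/

import Mathlib

open MeasureTheory Real Set Filter

noncomputable section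

/-- The distributed influence function `φ_δ`. -/
def phiDelta (δ z : ℝ) : ℝ := if 1 - δ ≤ |z| then (|z| - 1 + δ) / δ else 0

/-- `φ̄_δ(z) = φ_δ(z)/|z|`. -/
def phiBar (δ z : ℝ) : ℝ := phiDelta δ z / |z|

/-- The Chebyshev weight `w(z) = (1-z²)^{-1/2}`. -/
def chebW (z : ℝ) : ℝ := (Real.sqrt (1 - z ^ 2))⁻¹

/-- The `k`-th Chebyshev polynomial of the first kind, `T_k(z) = cos (k arccos z)`. -/
def chebT (k : ℕ) (z : ℝ) : ℝ := Real.cos (k * Real.arccos z)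

/-- The weighted `L²_w` norm on `(-1,1)`. -/
def L2wNorm (u : ℝ → ℝ) : ℝ := (∫ z in Ioo (-1 : ℝ) 1, u z ^ 2 * chebW z) ^ (1/2 : ℝ)

/-- The weighted `L^q_w` norm on `(-1,1)`. -/
def LqwNorm (q : ℝ) (u : ℝ → ℝ) : ℝ := (∫ z in Ioo (-1 : ℝ) 1, |u z| ^ q * chebW z) ^ (1/q)

/-- The weighted inner product `(u,v)_w`. -/
def innerW (u v : ℝ → ℝ) : ℝ := ∫ z in Ioo (-1 : ℝ) 1, u z * v z * chebW z

/-- Membership in `L²_w([-1,1])`. -/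
def MemL2w (u : ℝ → ℝ) : Prop :=
  Measurable u ∧ IntegrableOn (fun z => u z ^ 2 * chebW z) (Ioo (-1 : ℝ) 1)

/-- The peridynamic operator `L(θ)`. -/
def periL (δ : ℝ) (k h θ : ℝ → ℝ) (z : ℝ) : ℝ :=
  ∫ z' in Ioo (-1 : ℝ) 1,
    phiBar δ (z' - z) * ((k (θ z) + k (θ z')) / 2) * ((h (θ z') + z') - (h (θ z) + z))

/-- The continuous Chebyshev normalization constants. -/
def gammaC (k : ℕ) : ℝ := if k = 0 then π else π / 2

/-- The `k`-th Chebyshev coefficient of `u`. -/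
def chebCoeff (u : ℝ → ℝ) (k : ℕ) : ℝ := innerW u (chebT k) / gammaC k

/-- The orthogonal projection onto `S_N = span {T_0, …, T_N}`. -/
def PN (N : ℕ) (u : ℝ → ℝ) : ℝ → ℝ :=
  fun z => ∑ k ∈ Finset.range (N + 1), chebCoeff u k * chebT k z

/-- The space `S_N = span {T_0, …, T_N}`. -/
def SN (N : ℕ) : Set (ℝ → ℝ) :=
  {u | ∃ c : ℕ → ℝ, ∀ z, u z = ∑ k ∈ Finset.range (N + 1), c k * chebT k z}

/-- The squared `H^s_w` norm, `‖u‖² = ∑_{k≤s} ‖u^{(k)}‖²_{L²_w}`. -/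
def HswNormSq (s : ℕ) (u : ℝ → ℝ) : ℝ :=
  ∑ k ∈ Finset.range (s + 1), L2wNorm (iteratedDeriv k u) ^ 2

/-- The piecewise linear time interpolant of `(θ_n)`: for `t ∈ (t_{n-1}, t_n]`,
`θ^N_{Δt}(·,t) = ((t-t_{n-1})/Δt) θ_n + ((t_n-t)/Δt) θ_{n-1}`. -/
def pwLinear (Δt : ℝ) (θseq : ℕ → ℝ → ℝ) (t z : ℝ) : ℝ :=
  ((t - ((⌈t / Δt⌉₊ : ℝ) - 1) * Δt) / Δt) * θseq ⌈t / Δt⌉₊ z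
    + (((⌈t / Δt⌉₊ : ℝ) * Δt - t) / Δt) * θseq (⌈t / Δt⌉₊ - 1) z

/-- The piecewise constant interpolant `θ̃`: `θ̃(·,t) = θ_n` for `t ∈ (t_{n-1}, t_n]`. -/
def pwConst (Δt : ℝ) (θseq : ℕ → ℝ → ℝ) (t z : ℝ) : ℝ := θseq ⌈t / Δt⌉₊ z

/-- The piecewise constant interpolant `θ̂`: `θ̂(·,t) = θ_{n-1}` for `t ∈ (t_{n-1}, t_n]`. -/
def pwConstHat (Δt : ℝ) (θseq : ℕ → ℝ → ℝ) (t z : ℝ) : ℝ := θseq (⌈t / Δt⌉₊ - 1) z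

/-- The (a.e.) time derivative of the piecewise linear interpolant:
`∂_t θ^N_{Δt}(·,t) = (θ_n - θ_{n-1})/Δt` for `t ∈ (t_{n-1}, t_n)`. -/
def pwDeriv (Δt : ℝ) (θseq : ℕ → ℝ → ℝ) (t z : ℝ) : ℝ :=
  (θseq ⌈t / Δt⌉₊ z - θseq (⌈t / Δt⌉₊ - 1) z) / Δt


/-!
Because the discrete solution stays in `[-M, M]`, the coefficients `k(θ)` and `h(θ)` are
bounded, hence so is `L(θ^N_n)`, pointwise and uniformly in `N` and `n`. By Bessel's inequality
for the Chebyshev projection, each increment `θ_n - θ_{n-1} = Δt (P_N L(θ_n) + P_N S)` has squared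
norm `O(Δt²)`, so the `m ≤ N_T` increments contribute `O(m Δt²) = O(T²)`. The remaining terms are
bounded by `‖θ_m‖² ≤ M² π` and `Δt ∑ ‖L(θ_n)‖² ≤ T sup ‖L‖²`, where `π = ∫ w`.
-/

lemma chebW_nonneg (z : ℝ) : 0 ≤ chebW z := by
  unfold chebW; positivity

lemma measurable_chebW : Measurable chebW := by
  unfold chebW; fun_prop

lemma integrableOn_chebW : IntegrableOn chebW (Ioo (-1) 1) := by
  have h := Polynomial.Chebyshev.intervalIntegrable_sqrt_one_sub_sq_inv
  rw [intervalIntegrable_iff_integrableOn_Ioo_of_le (by norm_num)] at h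
  refine h.congr_fun (fun z _ => ?_) measurableSet_Ioo
  simp [chebW, Real.sqrt_inv]

lemma setIntegral_mul_chebW (f : ℝ → ℝ) :
    ∫ z in Ioo (-1) 1, f z * chebW z = ∫ x, f x ∂Polynomial.Chebyshev.measureT := by
  rw [Polynomial.Chebyshev.integral_measureT, intervalIntegral.integral_of_le (by norm_num),
    integral_Ioc_eq_integral_Ioo]
  simp [chebW, Real.sqrt_inv]

lemma setIntegral_chebW : ∫ z in Ioo (-1) 1, chebW z = π := by
  have h := setIntegral_mul_chebW (fun _ => 1)
  rw [Polynomial.Chebyshev.integral_measureT_eq_integral_cos] at h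
  simpa using h

lemma chebT_eq_eval_T (k : ℕ) {z : ℝ} (hz : z ∈ Icc (-1) 1) :
    chebT k z = (Polynomial.Chebyshev.T ℝ k).eval z := by
  have h := Polynomial.Chebyshev.T_real_cos (Real.arccos z) k
  rw [Real.cos_arccos hz.1 hz.2] at h
  rw [chebT, h]
  norm_cast

lemma continuous_chebT (k : ℕ) : Continuous (chebT k) := by
  unfold chebT; fun_prop

lemma abs_chebT_le_one (k : ℕ) (z : ℝ) : |chebT k z| ≤ 1 := Real.abs_cos_le_one _

lemma innerW_chebT_chebT (j k : ℕ) :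
    innerW (chebT j) (chebT k) = if j = k then gammaC j else 0 := by
  have h : innerW (chebT j) (chebT k) = ∫ x, (Polynomial.Chebyshev.T ℝ j).eval x *
      (Polynomial.Chebyshev.T ℝ k).eval x ∂Polynomial.Chebyshev.measureT := by
    rw [innerW, ← setIntegral_mul_chebW]
    refine setIntegral_congr_fun measurableSet_Ioo (fun z hz => ?_)
    rw [chebT_eq_eval_T j (Ioo_subset_Icc_self hz), chebT_eq_eval_T k (Ioo_subset_Icc_self hz)]
  rw [h]
  split_ifs with hjk
  · subst hjk
    rcases eq_or_ne j 0 with rfl | hj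
    · simpa [gammaC] using Polynomial.Chebyshev.integral_eval_T_real_mul_self_measureT_zero
    · simpa [gammaC, hj] using Polynomial.Chebyshev.integral_T_real_mul_self_measureT_of_ne_zero hj
  · exact Polynomial.Chebyshev.integral_eval_T_real_mul_eval_T_real_measureT_of_ne hjk

lemma integrableOn_mul_chebW_of_abs_le {u : ℝ → ℝ} (hu : Measurable u) {C : ℝ}
    (hC : ∀ z ∈ Ioo (-1 : ℝ) 1, |u z| ≤ C) :
    IntegrableOn (fun z => u z * chebW z) (Ioo (-1) 1) := by
  refine (integrableOn_chebW.const_mul C).mono' (hu.mul measurable_chebW).aestronglyMeasurable ?_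
  filter_upwards [ae_restrict_mem measurableSet_Ioo] with z hz
  rw [Real.norm_eq_abs, abs_mul, abs_of_nonneg (chebW_nonneg z)]
  exact mul_le_mul_of_nonneg_right (hC z hz) (chebW_nonneg z)

lemma memL2w_of_abs_le {u : ℝ → ℝ} (hu : Measurable u) {C : ℝ}
    (hC : ∀ z ∈ Ioo (-1 : ℝ) 1, |u z| ≤ C) : MemL2w u :=
  ⟨hu, integrableOn_mul_chebW_of_abs_le (hu.pow_const 2) (C := C ^ 2) fun z hz => by
    rw [abs_pow]; exact pow_le_pow_left₀ (abs_nonneg _) (hC z hz) 2⟩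

lemma MemL2w.integrableOn_mul_mul_chebW {u v : ℝ → ℝ} (hu : MemL2w u) (hv : MemL2w v) :
    IntegrableOn (fun z => u z * v z * chebW z) (Ioo (-1) 1) := by
  refine (hu.2.add hv.2).mono' ((hu.1.mul hv.1).mul measurable_chebW).aestronglyMeasurable
    (ae_of_all _ fun z => ?_)
  have hw := chebW_nonneg z
  have huv : |u z * v z| ≤ u z ^ 2 + v z ^ 2 := by
    rw [abs_mul]
    nlinarith [sq_abs (u z), sq_abs (v z), sq_nonneg (|u z| - |v z|)]
  rw [Real.norm_eq_abs, abs_mul, abs_of_nonneg hw, Pi.add_apply, ← add_mul]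
  exact mul_le_mul_of_nonneg_right huv hw

lemma L2wNorm_sq (u : ℝ → ℝ) : L2wNorm u ^ 2 = ∫ z in Ioo (-1 : ℝ) 1, u z ^ 2 * chebW z := by
  rw [L2wNorm, ← Real.sqrt_eq_rpow, Real.sq_sqrt]
  exact setIntegral_nonneg measurableSet_Ioo fun z _ => mul_nonneg (sq_nonneg _) (chebW_nonneg z)

lemma L2wNorm_sq_le_of_abs_le {u : ℝ → ℝ} {C : ℝ} (hC : ∀ z ∈ Ioo (-1 : ℝ) 1, |u z| ≤ C) :
    L2wNorm u ^ 2 ≤ C ^ 2 * π := by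
  rw [L2wNorm_sq, ← setIntegral_chebW, ← integral_const_mul]
  refine integral_mono_of_nonneg (ae_of_all _ fun z => mul_nonneg (sq_nonneg _) (chebW_nonneg z))
    (integrableOn_chebW.const_mul _) ?_
  filter_upwards [ae_restrict_mem measurableSet_Ioo] with z hz
  refine mul_le_mul_of_nonneg_right ?_ (chebW_nonneg z)
  rw [← sq_abs]
  exact pow_le_pow_left₀ (abs_nonneg _) (hC z hz) 2

lemma L2wNorm_const_mul_sq (c : ℝ) (u : ℝ → ℝ) :
    L2wNorm (fun z => c * u z) ^ 2 = c ^ 2 * L2wNorm u ^ 2 := by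
  simp only [L2wNorm_sq, ← integral_const_mul]
  congr 1 with z
  ring

lemma L2wNorm_add_sq_le {u v : ℝ → ℝ} (hu : MemL2w u) (hv : MemL2w v) :
    L2wNorm (fun z => u z + v z) ^ 2 ≤ 2 * L2wNorm u ^ 2 + 2 * L2wNorm v ^ 2 := by
  simp only [L2wNorm_sq, ← integral_const_mul]
  rw [← integral_add (hu.2.const_mul 2) (hv.2.const_mul 2)]
  refine integral_mono_of_nonneg (ae_of_all _ fun z => mul_nonneg (sq_nonneg _) (chebW_nonneg z))
    ((hu.2.const_mul 2).add (hv.2.const_mul 2)) (ae_of_all _ fun z => ?_)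
  have hw := chebW_nonneg z
  nlinarith [mul_nonneg (sq_nonneg (u z - v z)) hw]

lemma measurable_PN (N : ℕ) (u : ℝ → ℝ) : Measurable (PN N u) :=
  Finset.measurable_sum _ fun k _ => (continuous_chebT k).measurable.const_mul _

lemma abs_PN_le (N : ℕ) (u : ℝ → ℝ) (z : ℝ) :
    |PN N u z| ≤ ∑ k ∈ Finset.range (N + 1), |chebCoeff u k| := by
  refine (Finset.abs_sum_le_sum_abs _ _).trans (Finset.sum_le_sum fun k _ => ?_)
  rw [abs_mul]
  exact mul_le_of_le_one_right (abs_nonneg _) (abs_chebT_le_one k z)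

lemma memL2w_PN (N : ℕ) (u : ℝ → ℝ) : MemL2w (PN N u) :=
  memL2w_of_abs_le (measurable_PN N u) fun z _ => abs_PN_le N u z

lemma memL2w_chebT (k : ℕ) : MemL2w (chebT k) :=
  memL2w_of_abs_le (continuous_chebT k).measurable fun z _ => abs_chebT_le_one k z

lemma gammaC_pos (k : ℕ) : 0 < gammaC k := by
  unfold gammaC; split <;> positivity

lemma setIntegral_PN_sq_mul_chebW (N : ℕ) (u : ℝ → ℝ) :
    ∫ z in Ioo (-1 : ℝ) 1, PN N u z ^ 2 * chebW z
      = ∑ k ∈ Finset.range (N + 1), chebCoeff u k ^ 2 * gammaC k := by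
  set c := chebCoeff u
  have hT : ∀ j k, IntegrableOn (fun z => chebT j z * chebT k z * chebW z) (Ioo (-1) 1) :=
    fun j k => (memL2w_chebT j).integrableOn_mul_mul_chebW (memL2w_chebT k)
  have hexp : ∀ z, PN N u z ^ 2 * chebW z = ∑ j ∈ Finset.range (N + 1),
      ∑ k ∈ Finset.range (N + 1), c j * c k * (chebT j z * chebT k z * chebW z) := by
    intro z
    simp only [PN]
    rw [sq, Finset.sum_mul_sum, Finset.sum_mul]
    refine Finset.sum_congr rfl fun j _ => ?_
    rw [Finset.sum_mul]
    exact Finset.sum_congr rfl fun k _ => by ring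
  simp only [hexp]
  rw [integral_finsetSum _ fun j _ => integrable_finsetSum _ fun k _ => (hT j k).const_mul _]
  refine Finset.sum_congr rfl fun j hj => ?_
  rw [integral_finsetSum _ fun k _ => (hT j k).const_mul _,
    Finset.sum_eq_single_of_mem j hj fun k _ hkj => ?_]
  · rw [integral_const_mul, ← innerW, innerW_chebT_chebT, if_pos rfl, sq]
  · rw [integral_const_mul, ← innerW, innerW_chebT_chebT, if_neg (Ne.symm hkj), mul_zero]

lemma MemL2w.setIntegral_mul_PN_mul_chebW {u : ℝ → ℝ} (hu : MemL2w u) (N : ℕ) :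
    ∫ z in Ioo (-1 : ℝ) 1, u z * PN N u z * chebW z
      = ∑ k ∈ Finset.range (N + 1), chebCoeff u k ^ 2 * gammaC k := by
  have hexp : ∀ z, u z * PN N u z * chebW z = ∑ k ∈ Finset.range (N + 1),
      chebCoeff u k * (u z * chebT k z * chebW z) := by
    intro z
    simp only [PN, Finset.mul_sum, Finset.sum_mul]
    exact Finset.sum_congr rfl fun k _ => by ring
  simp only [hexp]
  rw [integral_finsetSum _ fun k _ =>
    (hu.integrableOn_mul_mul_chebW (memL2w_chebT k)).const_mul _]
  refine Finset.sum_congr rfl fun k _ => ?_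
  have := (gammaC_pos k).ne'
  rw [integral_const_mul, ← innerW, chebCoeff]
  field_simp

lemma MemL2w.L2wNorm_PN_sq_le {u : ℝ → ℝ} (hu : MemL2w u) (N : ℕ) :
    L2wNorm (PN N u) ^ 2 ≤ L2wNorm u ^ 2 := by
  have hcross := hu.integrableOn_mul_mul_chebW (memL2w_PN N u)
  have hexpand : ∫ z in Ioo (-1 : ℝ) 1, (u z - PN N u z) ^ 2 * chebW z
      = L2wNorm u ^ 2 - 2 * (∫ z in Ioo (-1 : ℝ) 1, u z * PN N u z * chebW z)
        + L2wNorm (PN N u) ^ 2 := by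
    have hdiff : IntegrableOn (fun z => u z ^ 2 * chebW z - 2 * (u z * PN N u z * chebW z))
        (Ioo (-1) 1) := hu.2.sub (hcross.const_mul 2)
    rw [L2wNorm_sq, L2wNorm_sq, ← integral_const_mul, ← integral_sub hu.2 (hcross.const_mul 2),
      ← integral_add hdiff (memL2w_PN N u).2]
    congr 1 with z
    ring
  have hnonneg : 0 ≤ ∫ z in Ioo (-1 : ℝ) 1, (u z - PN N u z) ^ 2 * chebW z :=
    setIntegral_nonneg measurableSet_Ioo fun z _ => mul_nonneg (sq_nonneg _) (chebW_nonneg z)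
  rw [hu.setIntegral_mul_PN_mul_chebW, L2wNorm_sq (PN N u), setIntegral_PN_sq_mul_chebW] at hexpand
  rw [L2wNorm_sq (PN N u), setIntegral_PN_sq_mul_chebW]
  linarith

lemma measurable_phiBar (δ : ℝ) : Measurable (phiBar δ) := by
  unfold phiBar phiDelta
  exact (Measurable.ite (measurableSet_le measurable_const measurable_abs)
    (by fun_prop) measurable_const).div measurable_abs

lemma abs_phiBar_le {δ : ℝ} (hδ0 : 0 < δ) (hδ1 : δ ≤ 1) (z : ℝ) : |phiBar δ z| ≤ 1 / δ := by
  unfold phiBar phiDelta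
  split_ifs with hz
  · rcases (abs_nonneg z).eq_or_lt with hz0 | hz0
    · simp [← hz0, hδ0.le]
    · rw [abs_div, abs_abs, abs_of_nonneg (div_nonneg (by linarith) hδ0.le),
        div_le_iff₀ hz0, div_mul_eq_mul_div, div_le_div_iff_of_pos_right hδ0]
      linarith
  · simp [hδ0.le]

lemma measurable_periL (δ : ℝ) {k h θ : ℝ → ℝ} (hk : Measurable k) (hh : Measurable h)
    (hθ : Measurable θ) : Measurable (periL δ k h θ) := by
  refine (StronglyMeasurable.integral_prod_right (f := fun z z' =>
    phiBar δ (z' - z) * ((k (θ z) + k (θ z')) / 2) * ((h (θ z') + z') - (h (θ z) + z)))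
    ?_).measurable
  have := measurable_phiBar δ
  fun_prop

lemma abs_periL_le {δ : ℝ} (hδ0 : 0 < δ) (hδ1 : δ ≤ 1) {k h θ : ℝ → ℝ} {Ck Ch : ℝ}
    (hk : ∀ z, |k (θ z)| ≤ Ck) (hh : ∀ z, |h (θ z)| ≤ Ch) {z : ℝ} (hz : |z| ≤ 1) :
    |periL δ k h θ z| ≤ 2 * (Ck * (2 * Ch + 2) / δ) := by
  have hintegrand : ∀ z' ∈ Ioo (-1 : ℝ) 1,
      ‖phiBar δ (z' - z) * ((k (θ z) + k (θ z')) / 2) * ((h (θ z') + z') - (h (θ z) + z))‖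
        ≤ Ck * (2 * Ch + 2) / δ := by
    intro z' hz'
    have hφ := abs_phiBar_le hδ0 hδ1 (z' - z)
    have hK : |(k (θ z) + k (θ z')) / 2| ≤ Ck := by
      rw [abs_div, abs_two]
      linarith [abs_add_le (k (θ z)) (k (θ z')), hk z, hk z']
    have hH : |(h (θ z') + z') - (h (θ z) + z)| ≤ 2 * Ch + 2 := by
      have : |z'| ≤ 1 := abs_le.2 ⟨hz'.1.le, hz'.2.le⟩
      linarith [abs_sub (h (θ z') + z') (h (θ z) + z), abs_add_le (h (θ z')) z',
        abs_add_le (h (θ z)) z, hh z, hh z']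
    have hCk : 0 ≤ Ck := (abs_nonneg _).trans (hk z)
    rw [Real.norm_eq_abs, abs_mul, abs_mul]
    calc _ ≤ 1 / δ * Ck * (2 * Ch + 2) :=
          mul_le_mul (mul_le_mul hφ hK (abs_nonneg _) (by positivity)) hH (abs_nonneg _)
            (by positivity)
      _ = Ck * (2 * Ch + 2) / δ := by ring
  have hvol : volume (Ioo (-1 : ℝ) 1) < ⊤ := by simp
  have := norm_setIntegral_le_of_norm_le_const hvol hintegrand
  rw [Real.norm_eq_abs, measureReal_def, Real.volume_Ioo] at this
  norm_num at this
  rw [periL]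
  linarith

lemma exists_abs_periL_le {δ : ℝ} (hδ0 : 0 < δ) (hδ1 : δ ≤ 1) {k h : ℝ → ℝ} (hk : Continuous k)
    (hh : Continuous h) (M : ℝ) :
    ∃ C, ∀ θ : ℝ → ℝ, (∀ z, θ z ∈ Icc (-M) M) → ∀ z ∈ Icc (-1 : ℝ) 1, |periL δ k h θ z| ≤ C := by
  obtain ⟨Ck, hCk⟩ := isCompact_Icc.exists_bound_of_continuousOn hk.continuousOn
  obtain ⟨Ch, hCh⟩ := isCompact_Icc.exists_bound_of_continuousOn hh.continuousOn
  exact ⟨_, fun θ hθ z hz => abs_periL_le hδ0 hδ1 (fun z => hCk _ (hθ z))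
    (fun z => hCh _ (hθ z)) (abs_le.2 hz)⟩

lemma continuous_of_mem_SN {N : ℕ} {u : ℝ → ℝ} (hu : u ∈ SN N) : Continuous u := by
  obtain ⟨c, hc⟩ := hu
  rw [funext hc]
  exact continuous_finsetSum _ fun k _ => continuous_const.mul (continuous_chebT k)

lemma L2wNorm_sub_sq_le_of_eq_add_PN {u v f g : ℝ → ℝ} {N : ℕ} {Δt : ℝ} (hf : MemL2w f)
    (hg : MemL2w g) (hstep : ∀ z, u z = v z + Δt * (PN N f z + PN N g z)) :
    L2wNorm (fun z => u z - v z) ^ 2 ≤ Δt ^ 2 * (2 * L2wNorm f ^ 2 + 2 * L2wNorm g ^ 2) := by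
  have hdiff : (fun z => u z - v z) = fun z => Δt * (PN N f z + PN N g z) := by
    funext z; rw [hstep z]; ring
  rw [hdiff, L2wNorm_const_mul_sq]
  gcongr
  have hPf := hf.L2wNorm_PN_sq_le N
  have hPg := hg.L2wNorm_PN_sq_le N
  linarith [L2wNorm_add_sq_le (memL2w_PN N f) (memL2w_PN N g)]

lemma natCast_mul_div_le {m NT : ℕ} (hm : m ≤ NT) {T : ℝ} (hT : 0 ≤ T) :
    m * (T / NT) ≤ T := by
  rcases NT.eq_zero_or_pos with rfl | hNT
  · simpa using hT
  have : (m : ℝ) ≤ NT := by exact_mod_cast hm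
  rw [mul_div_assoc', div_le_iff₀ (by positivity), mul_comm T]
  gcongr

lemma sum_Icc_le_of_le_mul {f : ℕ → ℝ} {m : ℕ} {Δt T A : ℝ} (hA : 0 ≤ A)
    (hmT : m * Δt ≤ T) (hf : ∀ n ∈ Finset.Icc 1 m, f n ≤ Δt * A) :
    ∑ n ∈ Finset.Icc 1 m, f n ≤ T * A :=
  calc ∑ n ∈ Finset.Icc 1 m, f n ≤ m * (Δt * A) := by
        simpa using Finset.sum_le_card_nsmul _ _ _ hf
    _ ≤ T * A := by rw [← mul_assoc]; exact mul_le_mul_of_nonneg_right hmT hA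

theorem fully_discrete_stability_general (δ : ℝ) (hδ : δ ∈ Ioo (0 : ℝ) 1)
    (k h : ℝ → ℝ) (hk : LocallyLipschitz k) (hh : LocallyLipschitz h)
    (M : ℝ) (T : ℝ) (hT : 0 < T)
    (S θ0 : ℝ → ℝ) (hS : MemL2w S) :
    ∃ C₀ > (0 : ℝ), ∀ N NT : ℕ, 0 < NT → ∀ θseq : ℕ → ℝ → ℝ,
      (∀ n ≤ NT, θseq n ∈ SN N) →
      (∀ n ≤ NT, ∀ z, θseq n z ∈ Icc (-M) M) →
      θseq 0 = PN N θ0 →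
      (∀ n, 1 ≤ n → n ≤ NT → ∀ z,
        θseq n z = θseq (n - 1) z
          + (T / NT) * (PN N (periL δ k h (θseq n)) z + PN N S z)) →
      ∀ m, 1 ≤ m → m ≤ NT →
        (∑ n ∈ Finset.Icc 1 m, L2wNorm (fun z => θseq n z - θseq (n - 1) z) ^ 2)
          + L2wNorm (θseq m) ^ 2
          + (T / NT) * ∑ n ∈ Finset.Icc 1 m, L2wNorm (periL δ k h (θseq n)) ^ 2
        ≤ C₀ := by
  obtain ⟨CL, hCL⟩ := exists_abs_periL_le hδ.1 hδ.2.le hk.continuous hh.continuous M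
  set A := 2 * (CL ^ 2 * π) + 2 * L2wNorm S ^ 2
  refine ⟨T * (T * A) + M ^ 2 * π + T * (CL ^ 2 * π) + 1, by positivity, ?_⟩
  intro N NT _ θseq hSN hM _ hstep m hm1 hmNT
  have hmΔt := natCast_mul_div_le hmNT hT.le
  have hΔtT : T / NT ≤ T := div_le_self hT.le (by exact_mod_cast hm1.trans hmNT)
  have hL : ∀ n ∈ Finset.Icc 1 m, L2wNorm (periL δ k h (θseq n)) ^ 2 ≤ CL ^ 2 * π :=
    fun n hn => L2wNorm_sq_le_of_abs_le fun z hz =>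
      hCL _ (hM n ((Finset.mem_Icc.1 hn).2.trans hmNT)) z (Ioo_subset_Icc_self hz)
  have hincr : ∀ n ∈ Finset.Icc 1 m,
      L2wNorm (fun z => θseq n z - θseq (n - 1) z) ^ 2 ≤ T / NT * (T / NT * A) := by
    intro n hn
    obtain ⟨hn1, hnm⟩ := Finset.mem_Icc.1 hn
    have hLmem : MemL2w (periL δ k h (θseq n)) :=
      memL2w_of_abs_le (measurable_periL δ hk.continuous.measurable hh.continuous.measurable
        (continuous_of_mem_SN (hSN n (hnm.trans hmNT))).measurable)
        fun z hz => hCL _ (hM n (hnm.trans hmNT)) z (Ioo_subset_Icc_self hz)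
    rw [← mul_assoc, ← sq]
    refine (L2wNorm_sub_sq_le_of_eq_add_PN hLmem hS (hstep n hn1 (hnm.trans hmNT))).trans ?_
    gcongr
    linarith [hL n hn]
  have hincr_sum := sum_Icc_le_of_le_mul (by positivity) hmΔt hincr
  have hL_sum := sum_Icc_le_of_le_mul (by positivity) hmΔt fun n hn =>
    mul_le_mul_of_nonneg_left (hL n hn) (by positivity : 0 ≤ T / NT)
  have hlast : L2wNorm (θseq m) ^ 2 ≤ M ^ 2 * π :=
    L2wNorm_sq_le_of_abs_le fun z _ => abs_le.2 (hM m hmNT z)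
  rw [← Finset.mul_sum] at hL_sum
  linarith [mul_le_mul_of_nonneg_left (mul_le_mul_of_nonneg_right hΔtT (by positivity : 0 ≤ A))
    hT.le]

/-- Stability estimate for the fully-discrete scheme: there is a constant
`C₀ > 0`, depending only on `θ⁰, S, T, M, k, h, δ` (in particular independent of `N` and
`Δt`), such that any solution `θ^N_n ∈ S_N` of the fully-discrete scheme taking values in
`[-M,M]` satisfies, for every `1 ≤ m ≤ N_T`,
`∑_{n=1}^{m} ‖θ^N_n − θ^N_{n-1}‖² + ‖θ^N_m‖² + Δt ∑_{n=1}^{m} ‖L(θ^N_n)‖² ≤ C₀`. -/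
theorem fully_discrete_stability (δ : ℝ) (hδ : δ ∈ Ioo (0 : ℝ) 1)
    (k h : ℝ → ℝ) (hk : LocallyLipschitz k) (hh : LocallyLipschitz h)
    (M : ℝ) (hM : 0 < M) (T : ℝ) (hT : 0 < T)
    (S θ0 : ℝ → ℝ) (hS : MemL2w S) (hθ0 : MemL2w θ0) :
    ∃ C₀ > (0 : ℝ), ∀ N NT : ℕ, 0 < NT → ∀ θseq : ℕ → ℝ → ℝ,
      (∀ n ≤ NT, θseq n ∈ SN N) →
      (∀ n ≤ NT, ∀ z, θseq n z ∈ Icc (-M) M) →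
      θseq 0 = PN N θ0 →
      (∀ n, 1 ≤ n → n ≤ NT → ∀ z,
        θseq n z = θseq (n - 1) z
          + (T / NT) * (PN N (periL δ k h (θseq n)) z + PN N S z)) →
      ∀ m, 1 ≤ m → m ≤ NT →
        (∑ n ∈ Finset.Icc 1 m, L2wNorm (fun z => θseq n z - θseq (n - 1) z) ^ 2)
          + L2wNorm (θseq m) ^ 2
          + (T / NT) * ∑ n ∈ Finset.Icc 1 m, L2wNorm (periL δ k h (θseq n)) ^ 2
        ≤ C₀ :=
  fully_discrete_stability_general δ hδ k h hk hh M T hT S θ0 hS
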